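/- arXiv:1204.3441 — 3 statements merged into one kernel-verified Lean document; each statement's English description precedes it below -/
import Mathlib

section
/- Let $\{U_i\}_{i=1}^m$ be a finite covering of a closed interval $[a,b] \subset \mathbb{R}$ by open intervals, where each $U_i$ has center $x_i$ and $x_i \in [a,b]$. Then there exists a finite partition of $[a,b]$ into (half-open) intervals $\{P_k\}$ such that for each $k$ there is an index $i$ with $\overline{P_k} \subset U_i$ and $x_i \in \overline{P_k}$. -/
/-- A valid partition of `[a, c]` subordinate to the covering data `x, r`. -/
def IsGoodPartition (a c : ℝ) (m : ℕ) (x r : Fin m → ℝ) : Prop :=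
  ∃ k : ℕ, ∃ t : Fin (k + 1) → ℝ, Monotone t ∧ t 0 = a ∧ t (Fin.last k) = c ∧
    ∀ j : Fin k, ∃ i : Fin m,
      Set.Icc (t j.castSucc) (t j.succ) ⊆ Set.Ioo (x i - r i) (x i + r i) ∧
      x i ∈ Set.Icc (t j.castSucc) (t j.succ)

/-- Appending one more interval `[c, d]` to a good partition of `[a, c]`. -/
lemma good_snoc {a c d : ℝ} {m : ℕ} {x r : Fin m → ℝ}
    (h : IsGoodPartition a c m x r) (hcd : c ≤ d) (i : Fin m)
    (h1 : Set.Icc c d ⊆ Set.Ioo (x i - r i) (x i + r i))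
    (h2 : x i ∈ Set.Icc c d) :
    IsGoodPartition a d m x r := by
  obtain ⟨k, t, hm, h0, hl, hp⟩ := h
  refine ⟨k + 1, Fin.snoc t d, ?_, ?_, ?_, ?_⟩
  · rw [Fin.monotone_iff_le_succ]
    intro j
    refine Fin.lastCases ?_ (fun j0 => ?_) j
    · rw [Fin.succ_last, Fin.snoc_last, Fin.snoc_castSucc, hl]
      exact hcd
    · rw [Fin.snoc_castSucc, Fin.succ_castSucc, Fin.snoc_castSucc]
      exact hm (Fin.castSucc_le_succ j0)
  · rw [show (0 : Fin (k+1+1)) = Fin.castSucc 0 from rfl, Fin.snoc_castSucc]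
    exact h0
  · exact Fin.snoc_last _ _
  · intro j
    refine Fin.lastCases ?_ (fun j0 => ?_) j
    · refine ⟨i, ?_, ?_⟩
      · rw [Fin.succ_last, Fin.snoc_last, Fin.snoc_castSucc, hl]
        exact h1
      · rw [Fin.succ_last, Fin.snoc_last, Fin.snoc_castSucc, hl]
        exact h2
    · obtain ⟨i0, hi1, hi2⟩ := hp j0
      refine ⟨i0, ?_, ?_⟩
      · rw [Fin.snoc_castSucc, Fin.succ_castSucc, Fin.snoc_castSucc]
        exact hi1
      · rw [Fin.snoc_castSucc, Fin.succ_castSucc, Fin.snoc_castSucc]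
        exact hi2

/-- Main creeping lemma: from a good partition of `[a, w]` whose endpoint `w`
sits inside `U j` to the left of its center `x j`, we can creep all the way to
`b`, by strong induction on the finite set `s` of available indices. -/
lemma good_creep (a b : ℝ) (m : ℕ) (x r : Fin m → ℝ) (hr : ∀ i, 0 < r i)
    (hx : ∀ i, x i ∈ Set.Icc a b)
    (hcov : Set.Icc a b ⊆ ⋃ i, Set.Ioo (x i - r i) (x i + r i)) :
    ∀ s : Finset (Fin m), ∀ j : Fin m, ∀ w : ℝ,
      IsGoodPartition a w m x r → x j - r j < w → w ≤ x j →
      (∀ j', x j + r j < x j' + r j' → j' ∈ s ∧ w ≤ x j' - r j') →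
      IsGoodPartition a b m x r := by
  intro s
  induction s using Finset.strongInduction with
  | _ s ih =>
    intro j w hw hjw hwj hinv
    -- from the hypotheses we can reach any point `d ∈ [x j, x j + r j)`
    have hGd : ∀ d, x j ≤ d → d < x j + r j → IsGoodPartition a d m x r := by
      intro d h1 h2
      refine good_snoc hw (le_trans hwj h1) j ?_ ⟨hwj, h1⟩
      intro y hy
      exact ⟨lt_of_lt_of_le hjw hy.1, lt_of_le_of_lt hy.2 h2⟩
    by_cases hb : b < x j + r j
    · exact hGd b (hx j).2 hb
    push_neg at hb
    set e := x j + r j with he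
    have hae : e ∈ Set.Icc a b := by
      constructor
      · have := (hx j).1
        have := hr j
        linarith
      · exact hb
    -- pick a coverer of `e` with maximal reach
    have hTne : ∃ i, i ∈ Finset.univ.filter
        (fun i => x i - r i < e ∧ e < x i + r i) := by
      obtain ⟨Ui, ⟨i, rfl⟩, hmem⟩ := hcov hae
      exact ⟨i, by simpa using hmem⟩
    obtain ⟨j', hj'T, hmax⟩ := Finset.exists_max_image _ (fun i => x i + r i) hTne
    simp only [Finset.mem_filter, Finset.mem_univ, true_and] at hj'T
    obtain ⟨hj'1, hj'2⟩ := hj'T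
    have hmax' : ∀ i, x i - r i < e → e < x i + r i → x i + r i ≤ x j' + r j' := by
      intro i hi1 hi2
      exact hmax i (by simp [hi1, hi2])
    obtain ⟨hj's, hwle⟩ := hinv j' hj'2
    have hxx' : x j < x j' := by linarith
    -- any index reaching beyond `j'` starts at or after `e`
    have hbeyond : ∀ j'', x j' + r j' < x j'' + r j'' → e ≤ x j'' - r j'' := by
      intro j'' h''
      by_contra hcon
      push_neg at hcon
      have : e < x j'' + r j'' := by linarith
      have := hmax' j'' hcon this
      linarith
    have hssub : s.erase j' ⊂ s := Finset.erase_ssubset hj's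
    -- choose the next anchor point `d`
    by_cases hcase : x j' < e
    · -- `d = x j'`
      have hgood' : IsGoodPartition a (x j') m x r := hGd (x j') (le_of_lt hxx') hcase
      refine ih (s.erase j') hssub j' (x j') hgood' (by linarith [hr j']) le_rfl ?_
      intro j'' h''
      have h2 : j'' ∈ s := (hinv j'' (by linarith)).1
      have h3 : e ≤ x j'' - r j'' := hbeyond j'' h''
      refine ⟨Finset.mem_erase.mpr ⟨?_, h2⟩, by linarith⟩
      intro hEq; rw [hEq] at h''; exact lt_irrefl _ h''
    · push_neg at hcase
      set d := (max (x j) (x j' - r j') + e) / 2 with hd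
      have hmaxlt : max (x j) (x j' - r j') < e :=
        max_lt (by linarith [hr j]) hj'1
      have hdlt : d < e := by
        rw [hd]; linarith
      have hdgt : max (x j) (x j' - r j') < d := by
        rw [hd]; linarith
      have hgood' : IsGoodPartition a d m x r :=
        hGd d (le_of_lt (lt_of_le_of_lt (le_max_left _ _) hdgt)) hdlt
      refine ih (s.erase j') hssub j' d hgood'
        (lt_of_le_of_lt (le_max_right _ _) hdgt) (by linarith) ?_
      intro j'' h''
      have h2 : j'' ∈ s := (hinv j'' (by linarith)).1
      have h3 : e ≤ x j'' - r j'' := hbeyond j'' h''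
      refine ⟨Finset.mem_erase.mpr ⟨?_, h2⟩, by linarith⟩
      intro hEq; rw [hEq] at h''; exact lt_irrefl _ h''

/-- Partition lemma: given a finite covering of `[a,b]` by open intervals
`U i = (x i - r i, x i + r i)` whose centers `x i` lie in `[a,b]`, there is a
partition `a = t₀ ≤ t₁ ≤ ⋯ ≤ t_k = b` of `[a,b]` into consecutive intervals such
that the closure of each partition interval is contained in some `U i` and
contains its center `x i`. -/
theorem partition_of_interval_covering (a b : ℝ) (hab : a ≤ b) (m : ℕ)
    (x : Fin m → ℝ) (r : Fin m → ℝ) (hr : ∀ i, 0 < r i)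
    (hx : ∀ i, x i ∈ Set.Icc a b)
    (hcov : Set.Icc a b ⊆ ⋃ i, Set.Ioo (x i - r i) (x i + r i)) :
    ∃ k : ℕ, ∃ t : Fin (k + 1) → ℝ, Monotone t ∧ t 0 = a ∧ t (Fin.last k) = b ∧
      ∀ j : Fin k, ∃ i : Fin m,
        Set.Icc (t j.castSucc) (t j.succ) ⊆ Set.Ioo (x i - r i) (x i + r i) ∧
        x i ∈ Set.Icc (t j.castSucc) (t j.succ) := by
  have ha : a ∈ Set.Icc a b := ⟨le_rfl, hab⟩
  -- pick a coverer of `a` with maximal reach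
  have hTne : ∃ i, i ∈ Finset.univ.filter
      (fun i => x i - r i < a ∧ a < x i + r i) := by
    obtain ⟨Ui, ⟨i, rfl⟩, hmem⟩ := hcov ha
    exact ⟨i, by simpa using hmem⟩
  obtain ⟨j0, hj0T, hmax⟩ := Finset.exists_max_image _ (fun i => x i + r i) hTne
  simp only [Finset.mem_filter, Finset.mem_univ, true_and] at hj0T
  obtain ⟨hj01, hj02⟩ := hj0T
  have hmax' : ∀ i, x i - r i < a → a < x i + r i → x i + r i ≤ x j0 + r j0 := by
    intro i hi1 hi2
    exact hmax i (by simp [hi1, hi2])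
  have hgooda : IsGoodPartition a a m x r :=
    ⟨0, fun _ => a, monotone_const, rfl, rfl, fun j => j.elim0⟩
  have := good_creep a b m x r hr hx hcov Finset.univ j0 a hgooda hj01 (hx j0).1 ?_
  · exact this
  · intro j' h'
    refine ⟨Finset.mem_univ _, ?_⟩
    by_contra hcon
    push_neg at hcon
    have h2 : a < x j' + r j' := by linarith
    have := hmax' j' hcon h2
    linarith
end

section
/- The homogeneous norm $\rho(z,t) = (|z|^4 + t^2)^{1/4}$ on the Heisenberg group $\mathbb{H}^n$ satisfies the triangle inequality with respect to the group law: $\rho(x \cdot y) \le \rho(x) + \rho(y)$ for all $x, y \in \mathbb{H}^n$. -/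
/-- The Heisenberg group `ℍⁿ = ℂⁿ × ℝ` with group law
`(z,t)·(w,s) = (z+w, t+s+2 Im⟨z,w⟩)`, `⟨z,w⟩ = ∑ zⱼ w̄ⱼ`. -/
noncomputable def heisenbergMul {n : ℕ} (x y : (Fin n → ℂ) × ℝ) : (Fin n → ℂ) × ℝ :=
  (x.1 + y.1, x.2 + y.2 + 2 * (∑ j, x.1 j * (starRingEnd ℂ) (y.1 j)).im)

/-- The homogeneous norm `ρ(z,t) = (|z|⁴ + t²)^{1/4}`. -/
noncomputable def heisenbergNorm {n : ℕ} (x : (Fin n → ℂ) × ℝ) : ℝ :=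
  ((∑ j, Complex.normSq (x.1 j)) ^ 2 + x.2 ^ 2) ^ ((1 : ℝ) / 4)

/-!
Write `ρ(z,t)² = ‖|z|² + i t‖`. Under the group law this complex number is additive up to
the cross term `2⟨z,w⟩`, so the triangle inequality in `ℂ` together with Cauchy–Schwarz,
`|⟨z,w⟩| ≤ |z| |w| ≤ ρ(x) ρ(y)`, gives `ρ(x·y)² ≤ (ρ(x) + ρ(y))²`.
-/

open Finset Complex ComplexConjugate

lemma Complex.norm_sum_mul_conj_le {ι : Type*} (s : Finset ι) (z w : ι → ℂ) :
    ‖∑ j ∈ s, z j * conj (w j)‖ ≤ √(∑ j ∈ s, normSq (z j)) * √(∑ j ∈ s, normSq (w j)) :=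
  calc ‖∑ j ∈ s, z j * conj (w j)‖
      ≤ ∑ j ∈ s, √(normSq (z j)) * √(normSq (w j)) := by
        refine (norm_sum_le _ _).trans_eq (sum_congr rfl fun j _ => ?_)
        rw [norm_mul, norm_conj, norm_def, norm_def]
    _ ≤ _ := Real.sum_sqrt_mul_sqrt_le s (fun j => normSq_nonneg _) fun j => normSq_nonneg _

section

variable {n : ℕ}

noncomputable def heisenbergGauge (x : (Fin n → ℂ) × ℝ) : ℂ :=
  ⟨∑ j, normSq (x.1 j), x.2⟩

lemma heisenbergNorm_sq (x : (Fin n → ℂ) × ℝ) :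
    heisenbergNorm x ^ 2 = ‖heisenbergGauge x‖ := by
  rw [heisenbergNorm, ← Real.rpow_natCast, ← Real.rpow_mul (by positivity), norm_def,
    normSq_apply, Real.sqrt_eq_rpow]
  norm_num [heisenbergGauge, sq]

lemma heisenbergNorm_nonneg (x : (Fin n → ℂ) × ℝ) : 0 ≤ heisenbergNorm x :=
  Real.rpow_nonneg (by positivity) _

lemma sqrt_sum_normSq_le_heisenbergNorm (x : (Fin n → ℂ) × ℝ) :
    √(∑ j, normSq (x.1 j)) ≤ heisenbergNorm x := by
  rw [Real.sqrt_le_left (heisenbergNorm_nonneg x), heisenbergNorm_sq]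
  exact re_le_norm (heisenbergGauge x)

lemma heisenbergGauge_heisenbergMul (x y : (Fin n → ℂ) × ℝ) :
    heisenbergGauge (heisenbergMul x y) =
      heisenbergGauge x + heisenbergGauge y + 2 * ∑ j, x.1 j * conj (y.1 j) := by
  apply Complex.ext
  · simp only [heisenbergGauge, heisenbergMul, Pi.add_apply, normSq_add, sum_add_distrib,
      add_re, mul_re, re_ofNat, im_ofNat, zero_mul, sub_zero, re_sum, mul_sum]
  · simp only [heisenbergGauge, heisenbergMul, add_im, mul_im, re_ofNat, im_ofNat, zero_mul,
      add_zero]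

end

theorem heisenberg_norm_triangle {n : ℕ} (x y : (Fin n → ℂ) × ℝ) :
    heisenbergNorm (heisenbergMul x y) ≤ heisenbergNorm x + heisenbergNorm y := by
  have hx := heisenbergNorm_nonneg x
  have hy := heisenbergNorm_nonneg y
  have hCS : ‖∑ j, x.1 j * conj (y.1 j)‖ ≤ heisenbergNorm x * heisenbergNorm y :=
    (norm_sum_mul_conj_le _ _ _).trans <| mul_le_mul (sqrt_sum_normSq_le_heisenbergNorm x)
      (sqrt_sum_normSq_le_heisenbergNorm y) (Real.sqrt_nonneg _) hx
  refine le_of_pow_le_pow_left₀ two_ne_zero (add_nonneg hx hy) ?_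
  calc heisenbergNorm (heisenbergMul x y) ^ 2
      = ‖heisenbergGauge x + heisenbergGauge y + 2 * ∑ j, x.1 j * conj (y.1 j)‖ := by
        rw [heisenbergNorm_sq, heisenbergGauge_heisenbergMul]
    _ ≤ ‖heisenbergGauge x‖ + ‖heisenbergGauge y‖ + 2 * ‖∑ j, x.1 j * conj (y.1 j)‖ := by
        refine (norm_add_le _ _).trans (add_le_add (norm_add_le _ _) ?_)
        rw [norm_mul, RCLike.norm_ofNat]
    _ ≤ (heisenbergNorm x + heisenbergNorm y) ^ 2 := by
        rw [← heisenbergNorm_sq, ← heisenbergNorm_sq]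
        nlinarith
end

section
/- Let $U$ be a John domain in a metric space $(\mathbb{X}, \rho)$ with distinguished point $x_*$, inner radius $\alpha$, and outer radius $\beta$. Then $U$ is a Hölder domain: there exists $H > 0$ (depending on $\alpha$, $\beta$, and $\rho_U(x_*)$) such that every $x \in U$ can be joined to $x_*$ by a rectifiable curve $\gamma$ with $\int_\gamma \frac{ds}{\rho_U(\gamma(s))} \le H \ln\big(\frac{H}{\rho_U(x)}\big)$. -/
open Metric intervalIntegral

private lemma holder_aux (c M B H ρ : ℝ) (hc : 0 ≤ c) (hM : 1 ≤ M) (hB : 0 ≤ B)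
    (hρ : 0 < ρ) (hρM : ρ ≤ M) (hH : H = Real.exp 1 * M + c + 1 + c * B) :
    1 ≤ H * (Real.log H - Real.log ρ) ∧
    1 + c * B - c * Real.log ρ ≤ H * (Real.log H - Real.log ρ) := by
  have hMpos : (0:ℝ) < M := lt_of_lt_of_le one_pos hM
  have he : (0:ℝ) < Real.exp 1 := Real.exp_pos 1
  have hHpos : 0 < H := by
    rw [hH]; positivity
  have hHc : c ≤ H := by nlinarith
  have h1cB : 1 + c * B ≤ H := by nlinarith
  have hlogM : 0 ≤ Real.log M := Real.log_nonneg hM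
  have hlogρM : Real.log ρ ≤ Real.log M := Real.log_le_log hρ hρM
  have hHeM : Real.exp 1 * M ≤ H := by nlinarith
  have hlogH : 1 + Real.log M ≤ Real.log H := by
    have : Real.log (Real.exp 1 * M) ≤ Real.log H :=
      Real.log_le_log (by positivity) hHeM
    rwa [Real.log_mul (by positivity) hMpos.ne', Real.log_exp] at this
  constructor
  · nlinarith [mul_le_mul_of_nonneg_left (sub_nonneg.2 hlogρM) hHpos.le,
      mul_le_mul_of_nonneg_left hlogH hHpos.le]
  · nlinarith [mul_le_mul_of_nonneg_left hlogH hHpos.le,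
      mul_le_mul_of_nonneg_right (sub_nonneg.2 hlogρM) (sub_nonneg.2 hHc)]

/-- Every John domain is a Hölder domain: if every `x ∈ U` is joined to the
distinguished point `x⁎` by an arc-length curve `γ : [0,l] → U`, `l ≤ β`, with
`dist(γ(s), ∂U) ≥ (α/l) s`, then there is `H > 0` such that every `x ∈ U` is
joined to `x⁎` by a rectifiable curve of quasihyperbolic length at most
`H log(H / dist(x, ∂U))`. -/
theorem john_domain_is_holder_domain {X : Type*} [MetricSpace X]
    (U : Set X) (hUopen : IsOpen U) (hUne : U.Nonempty) (hUproper : U ≠ Set.univ)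
    (hUbdd : Bornology.IsBounded U)
    (xstar : X) (hxstar : xstar ∈ U) (α β : ℝ) (hα : 0 < α) (hαβ : α ≤ β)
    (hJohn : ∀ x ∈ U, ∃ l : ℝ, 0 ≤ l ∧ l ≤ β ∧ ∃ γ : ℝ → X,
      γ 0 = x ∧ γ l = xstar ∧ (∀ s ∈ Set.Icc (0 : ℝ) l, γ s ∈ U) ∧
      LipschitzOnWith 1 γ (Set.Icc 0 l) ∧
      (∀ s ∈ Set.Icc (0 : ℝ) l, α * s / l ≤ infDist (γ s) (frontier U))) :
    ∃ H : ℝ, 0 < H ∧ ∀ x ∈ U, ∃ l : ℝ, 0 ≤ l ∧ ∃ γ : ℝ → X,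
      γ 0 = x ∧ γ l = xstar ∧ (∀ s ∈ Set.Icc (0 : ℝ) l, γ s ∈ U) ∧
      LipschitzOnWith 1 γ (Set.Icc 0 l) ∧
      (∫ s in (0 : ℝ)..l, (infDist (γ s) (frontier U))⁻¹) ≤
        H * Real.log (H / infDist x (frontier U)) := by
  set F := frontier U with hF
  set c : ℝ := β / α with hc
  set M : ℝ := max (Metric.diam (closure U)) 1 with hM
  set B : ℝ := max (2 * β) 1 with hB
  set H : ℝ := Real.exp 1 * M + c + 1 + c * B with hHdef
  have hβ : 0 < β := lt_of_lt_of_le hα hαβ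
  have hc0 : 0 ≤ c := by positivity
  have hM1 : (1:ℝ) ≤ M := le_max_right _ _
  have hB0 : (0:ℝ) ≤ B := le_trans zero_le_one (le_max_right _ _)
  have hHpos : 0 < H := by
    have := Real.exp_pos 1
    have : (0:ℝ) < Real.exp 1 * M := by positivity
    nlinarith
  refine ⟨H, hHpos, fun x hx => ?_⟩
  obtain ⟨l, hl0, hlβ, γ, hγ0, hγl, hγU, hγlip, hγdist⟩ := hJohn x hx
  refine ⟨l, hl0, γ, hγ0, hγl, hγU, hγlip, ?_⟩
  rcases F.eq_empty_or_nonempty with hFe | hFne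
  · simp [hFe, Metric.infDist_empty]
  -- frontier nonempty case
  have hxF : x ∉ F := fun h => h.2 (hUopen.interior_eq.symm ▸ hx)
  have hρx : 0 < infDist x F := (isClosed_frontier.notMem_iff_infDist_pos hFne).1 hxF
  set ρx : ℝ := infDist x F with hρxdef
  have hρxM : ρx ≤ M := by
    obtain ⟨y, hy⟩ := hFne
    refine le_trans (infDist_le_dist_of_mem hy) (le_trans ?_ (le_max_left _ _))
    exact Metric.dist_le_diam_of_mem hUbdd.closure (subset_closure hx)
      (frontier_subset_closure hy)
  obtain ⟨haux1, haux2⟩ := holder_aux c M B H ρx hc0 hM1 hB0 hρx hρxM hHdef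
  have hlogdiv : Real.log (H / ρx) = Real.log H - Real.log ρx :=
    Real.log_div hHpos.ne' hρx.ne'
  -- positivity of the distance along the curve
  have hpos : ∀ s ∈ Set.Icc (0:ℝ) l, 0 < infDist (γ s) F := by
    intro s hs
    rcases eq_or_lt_of_le hs.1 with h | h
    · rw [← h, hγ0]; exact hρx
    · have hl : 0 < l := lt_of_lt_of_le h hs.2
      exact lt_of_lt_of_le (by positivity) (hγdist s hs)
  have hcont : ContinuousOn (fun s => (infDist (γ s) F)⁻¹) (Set.Icc 0 l) :=
    (((continuous_infDist_pt F).comp_continuousOn hγlip.continuousOn)).inv₀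
      (fun s hs => (hpos s hs).ne')
  set t : ℝ := min l (ρx / 2) with htdef
  have ht0 : 0 ≤ t := le_min hl0 (by positivity)
  have htl : t ≤ l := min_le_left _ _
  have ht2 : t ≤ ρx / 2 := min_le_right _ _
  have hint1 : IntervalIntegrable (fun s => (infDist (γ s) F)⁻¹) MeasureTheory.volume 0 t :=
    (hcont.mono (by rw [Set.uIcc_of_le ht0]; exact Set.Icc_subset_Icc le_rfl htl)
      ).intervalIntegrable
  have hint2 : IntervalIntegrable (fun s => (infDist (γ s) F)⁻¹) MeasureTheory.volume t l :=
    (hcont.mono (by rw [Set.uIcc_of_le htl]; exact Set.Icc_subset_Icc ht0 le_rfl)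
      ).intervalIntegrable
  have hsplit : (∫ s in (0:ℝ)..l, (infDist (γ s) F)⁻¹) =
      (∫ s in (0:ℝ)..t, (infDist (γ s) F)⁻¹) + ∫ s in t..l, (infDist (γ s) F)⁻¹ :=
    (integral_add_adjacent_intervals hint1 hint2).symm
  -- first piece bounded by 1
  have hbound1 : (∫ s in (0:ℝ)..t, (infDist (γ s) F)⁻¹) ≤ 1 := by
    have hptwise : ∀ s ∈ Set.Icc (0:ℝ) t, (infDist (γ s) F)⁻¹ ≤ (ρx / 2)⁻¹ := by
      intro s hs
      have hsl : s ∈ Set.Icc (0:ℝ) l := ⟨hs.1, le_trans hs.2 htl⟩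
      have hdist : dist (γ 0) (γ s) ≤ 1 * dist (0:ℝ) s :=
        hγlip.dist_le_mul 0 ⟨le_rfl, hl0⟩ s hsl
      have hd : dist x (γ s) ≤ s := by
        rw [← hγ0]
        simpa [Real.dist_eq, abs_of_nonneg hs.1] using hdist
      have hlow : ρx / 2 ≤ infDist (γ s) F := by
        have h1 : ρx ≤ infDist (γ s) F + dist x (γ s) :=
          infDist_le_infDist_add_dist
        have : s ≤ ρx / 2 := le_trans hs.2 ht2
        linarith
      exact inv_anti₀ (by positivity) hlow
    calc (∫ s in (0:ℝ)..t, (infDist (γ s) F)⁻¹)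
        ≤ ∫ _ in (0:ℝ)..t, (ρx / 2)⁻¹ :=
          integral_mono_on ht0 hint1 intervalIntegrable_const hptwise
      _ = t * (ρx / 2)⁻¹ := by rw [integral_const, smul_eq_mul, sub_zero]
      _ ≤ (ρx / 2) * (ρx / 2)⁻¹ := by
          apply mul_le_mul_of_nonneg_right ht2 (by positivity)
      _ = 1 := mul_inv_cancel₀ (by positivity)
  rcases eq_or_lt_of_le htl with hteq | htlt
  · -- t = l : second piece vanishes
    have h2 : (∫ s in t..l, (infDist (γ s) F)⁻¹) = 0 := by rw [hteq, integral_same]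
    rw [hsplit, h2, add_zero, hlogdiv]
    exact le_trans hbound1 haux1
  · -- t < l : second piece bounded by c * (log (2β) - log ρx)
    have hlpos : 0 < l := lt_of_le_of_lt ht0 htlt
    have hρl : ρx / 2 ≤ l := by
      by_contra hcon
      push_neg at hcon
      exact htlt.ne (min_eq_left hcon.le)
    have htval : t = ρx / 2 := min_eq_right hρl
    have htpos : 0 < t := by rw [htval]; positivity
    have hbound2 : (∫ s in t..l, (infDist (γ s) F)⁻¹) ≤
        c * (Real.log (2 * β) - Real.log ρx) := by
      have hptwise : ∀ s ∈ Set.Icc t l, (infDist (γ s) F)⁻¹ ≤ (l / α) * s⁻¹ := by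
        intro s hs
        have hspos : 0 < s := lt_of_lt_of_le htpos hs.1
        have hsl : s ∈ Set.Icc (0:ℝ) l := ⟨hspos.le, hs.2⟩
        have hlow : α * s / l ≤ infDist (γ s) F := hγdist s hsl
        have h0 : (0:ℝ) < α * s / l := by positivity
        have := inv_anti₀ h0 hlow
        have heq : (α * s / l)⁻¹ = (l / α) * s⁻¹ := by
          field_simp
        rwa [heq] at this
      have hintg : IntervalIntegrable (fun s => (l / α) * s⁻¹) MeasureTheory.volume t l := by
        apply ContinuousOn.intervalIntegrable
        apply ContinuousOn.mul continuousOn_const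
        apply ContinuousOn.inv₀ continuousOn_id
        intro s hs
        rw [Set.uIcc_of_le htlt.le] at hs
        exact (lt_of_lt_of_le htpos hs.1).ne'
      have hval : (∫ s in t..l, (l / α) * s⁻¹) = (l / α) * Real.log (l / t) := by
        rw [integral_const_mul, integral_inv]
        rw [Set.uIcc_of_le htlt.le]
        exact fun h => absurd h.1 (not_le.2 htpos)
      have hlog0 : 0 ≤ Real.log (l / t) :=
        Real.log_nonneg ((one_le_div htpos).2 htlt.le)
      have hlogle : Real.log (l / t) ≤ Real.log (2 * β) - Real.log ρx := by
        rw [Real.log_div hlpos.ne' htpos.ne', htval,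
          Real.log_div hρx.ne' two_ne_zero, Real.log_mul two_ne_zero hβ.ne']
        have : Real.log l ≤ Real.log β := Real.log_le_log hlpos hlβ
        linarith
      have hla : l / α ≤ c := by
        rw [hc]; gcongr
      calc (∫ s in t..l, (infDist (γ s) F)⁻¹)
          ≤ ∫ s in t..l, (l / α) * s⁻¹ :=
            integral_mono_on htlt.le hint2 hintg hptwise
        _ = (l / α) * Real.log (l / t) := hval
        _ ≤ c * (Real.log (2 * β) - Real.log ρx) := by
            apply mul_le_mul hla hlogle hlog0 hc0
    have hlog2β : Real.log (2 * β) ≤ B := by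
      have h1 := Real.log_le_sub_one_of_pos (show (0:ℝ) < 2 * β by positivity)
      have h2 : Real.log (2 * β) ≤ 2 * β := by linarith
      exact le_trans h2 (le_max_left _ _)
    rw [hsplit, hlogdiv]
    refine le_trans (add_le_add hbound1 hbound2) ?_
    have : c * (Real.log (2 * β) - Real.log ρx) ≤ c * B - c * Real.log ρx := by
      nlinarith [mul_le_mul_of_nonneg_left hlog2β hc0]
    linarith
end
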